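/- Fix n ≥ 1. Let P be the poset whose elements are the pairs (i, σ) with 1 ≤ i ≤ n and σ ∈ {+, −}, together with one additional element c, with partial order generated by: (i, σ) < (j, τ) whenever i < j, (i, σ) and (i, −σ) are incomparable, and x < c for every x ≠ c. Let B = {x ∈ ℝ^n : ‖x‖ ≤ 1} be the closed unit ball and define s : B → P by s(x) = c if ‖x‖ < 1, and s(x) = (i₀, sign(x_{i₀})) if ‖x‖ = 1, where i₀ = max{ i : x_i ≠ 0 }. Then s is continuous when P is given the topology whose open sets are the upward-closed subsets; equivalently, for every q ∈ P the set s^{-1}({p : p ≥ q}) is open in B. -/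

import Mathlib

/-- A boundary stratum label `(i, σ)` with `i` an index and `σ ∈ {+,−}` a sign
(`true` = `+`). -/
structure Stratum (n : ℕ) where
  idx : Fin n
  sign : Bool

/-- The partial order generated by `(i, σ) < (j, τ)` whenever `i < j`, with `(i, +)` and
`(i, −)` incomparable.  The cone point `c` is adjoined as the top element `⊤` of
`WithTop (Stratum n)`. -/
instance (n : ℕ) : PartialOrder (Stratum n) where
  le a b := a = b ∨ a.idx < b.idx
  le_refl a := Or.inl rfl
  le_trans a b c hab hbc := by
    rcases hab with rfl | h
    · exact hbc
    · rcases hbc with rfl | h'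
      · exact Or.inr h
      · exact Or.inr (h.trans h')
  le_antisymm a b hab hba := by
    rcases hab with rfl | h
    · rfl
    · rcases hba with rfl | h'
      · rfl
      · exact absurd (h.trans h') (lt_irrefl _)

/-- The stratification of the closed unit ball `B ⊆ ℝ^n`: interior points go to the cone
point `⊤`, and a boundary point `x` (with `‖x‖ = 1`) goes to `(i₀, sign x_{i₀})` where
`i₀ = max {i : x_i ≠ 0}`. -/
noncomputable def strat (n : ℕ) (x : {y : EuclideanSpace ℝ (Fin n) // ‖y‖ ≤ 1}) :
    WithTop (Stratum n) := by
  classical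
  exact
    if ‖x.1‖ < 1 then ⊤
    else if hs : (Finset.univ.filter fun m : Fin n => x.1 m ≠ 0).Nonempty then
      ((⟨Finset.max' _ hs, decide (0 < x.1 (Finset.max' _ hs))⟩ : Stratum n) :
        WithTop (Stratum n))
    else ⊤

/-! The stratum `(i₀, sign x_{i₀})` lies above `(i, σ)` iff some coordinate after `i` is
nonzero or `x_i` itself has sign `σ`. Both conditions are open, and so is `‖x‖ < 1`, so every
up-set pulls back to a union of open sets. -/

open Set

lemma Stratum.le_iff {n : ℕ} {a b : Stratum n} : a ≤ b ↔ a = b ∨ a.idx < b.idx := Iff.rfl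

def signRegion : Bool → Set ℝ
  | true => Ioi 0
  | false => Iio 0

lemma isOpen_signRegion (b : Bool) : IsOpen (signRegion b) := by
  cases b
  exacts [isOpen_Iio, isOpen_Ioi]

lemma mem_signRegion_iff {t : ℝ} {b : Bool} :
    t ∈ signRegion b ↔ t ≠ 0 ∧ decide (0 < t) = b := by
  cases b <;> simp only [signRegion, mem_Ioi, mem_Iio, decide_eq_true_eq,
    decide_eq_false_iff_not, not_lt]
  · exact ⟨fun h => ⟨h.ne, h.le⟩, fun h => lt_of_le_of_ne h.2 h.1⟩
  · exact ⟨fun h => ⟨h.ne', h⟩, And.right⟩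

lemma exists_last_ne_zero {ι M : Type*} [Fintype ι] [LinearOrder ι] [Zero M] {f : ι → M}
    (hf : f ≠ 0) : ∃ i, f i ≠ 0 ∧ ∀ m, i < m → f m = 0 := by
  classical
  obtain ⟨j, hj⟩ := Function.ne_iff.mp hf
  obtain ⟨i, hi, hmax⟩ :=
    Finset.exists_max_image ({m | f m ≠ 0} : Finset ι) id ⟨j, by simpa⟩
  refine ⟨i, by simpa using hi, fun m him => ?_⟩
  by_contra hm
  exact (hmax m (by simpa using hm)).not_gt him

section

variable {n : ℕ} (x : {y : EuclideanSpace ℝ (Fin n) // ‖y‖ ≤ 1})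

lemma strat_of_norm_lt_one (hx : ‖x.1‖ < 1) : strat n x = ⊤ := by
  simp [strat, hx]

lemma exists_strat_eq_coe (hx : ¬ ‖x.1‖ < 1) :
    ∃ i, x.1 i ≠ 0 ∧ (∀ m, i < m → x.1 m = 0) ∧
      strat n x = ↑(⟨i, decide (0 < x.1 i)⟩ : Stratum n) := by
  classical
  have hx0 : x.1 ≠ 0 := by
    intro h
    simp [h] at hx
  obtain ⟨i, hi, hlast⟩ := exists_last_ne_zero (f := ⇑x.1) fun h => hx0 (by ext m; simp [h])
  have hs : (Finset.univ.filter fun m : Fin n => x.1 m ≠ 0).Nonempty := ⟨i, by simpa using hi⟩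
  have hmax : Finset.max' _ hs = i := by
    refine le_antisymm (Finset.max'_le _ _ _ fun m hm => ?_)
      (Finset.le_max' _ _ (by simpa using hi))
    by_contra him
    exact (Finset.mem_filter.mp hm).2 (hlast m (not_le.mp him))
  refine ⟨i, hi, hlast, ?_⟩
  simp only [strat, if_neg hx, dif_pos hs, hmax]

lemma top_le_strat_iff : ⊤ ≤ strat n x ↔ ‖x.1‖ < 1 := by
  by_cases hx : ‖x.1‖ < 1
  · simp [strat_of_norm_lt_one x hx, hx]
  · obtain ⟨i, -, -, h⟩ := exists_strat_eq_coe x hx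
    simp [h, hx]

lemma coe_le_strat_iff (s : Stratum n) :
    ↑s ≤ strat n x ↔
      ‖x.1‖ < 1 ∨ (∃ m, s.idx < m ∧ x.1 m ≠ 0) ∨ x.1 s.idx ∈ signRegion s.sign := by
  by_cases hx : ‖x.1‖ < 1
  · simp [strat_of_norm_lt_one x hx, hx]
  obtain ⟨i, hi, hlast, h⟩ := exists_strat_eq_coe x hx
  have le_of_ne_zero : ∀ m, x.1 m ≠ 0 → m ≤ i := fun m hm =>
    not_lt.mp fun him => hm (hlast m him)
  rw [h, WithTop.coe_le_coe, Stratum.le_iff, or_iff_right hx, mem_signRegion_iff]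
  constructor
  · rintro (rfl | hsi)
    · exact Or.inr ⟨hi, rfl⟩
    · exact Or.inl ⟨i, hsi, hi⟩
  · rintro (⟨m, hsm, hm⟩ | ⟨hs0, hsign⟩)
    · exact Or.inr (hsm.trans_le (le_of_ne_zero m hm))
    · rcases (le_of_ne_zero _ hs0).lt_or_eq with hsi | hsi
      · exact Or.inr hsi
      · subst hsi
        exact Or.inl (by rw [hsign])

end

theorem strat_continuous_general (n : ℕ) :
    ∀ q : WithTop (Stratum n),
      IsOpen {x : {y : EuclideanSpace ℝ (Fin n) // ‖y‖ ≤ 1} | q ≤ strat n x} := by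
  have hcoord (m : Fin n) :
      Continuous fun x : {y : EuclideanSpace ℝ (Fin n) // ‖y‖ ≤ 1} => x.1 m :=
    (EuclideanSpace.proj m).continuous.comp continuous_subtype_val
  have hinterior : IsOpen {x : {y : EuclideanSpace ℝ (Fin n) // ‖y‖ ≤ 1} | ‖x.1‖ < 1} :=
    isOpen_lt (continuous_norm.comp continuous_subtype_val) continuous_const
  intro q
  induction q using WithTop.recTopCoe with
  | top =>
    simpa only [top_le_strat_iff] using hinterior
  | coe s =>
    simp only [coe_le_strat_iff, ofPred_or, ofPred_exists, ofPred_and]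
    refine hinterior.union ((isOpen_iUnion fun m => ?_).union ?_)
    · exact isOpen_const.inter (isOpen_ne_fun (hcoord m) continuous_const)
    · exact (isOpen_signRegion s.sign).preimage (hcoord s.idx)

/-- The stratification of the hemispherical `n`-disk is continuous for the Alexandrov
upper topology on the stratifying poset: for every `q` in the poset, the preimage of the
up-set `{p : p ≥ q}` is open in the closed unit ball. -/
theorem strat_continuous (n : ℕ) (hn : 1 ≤ n) :
    ∀ q : WithTop (Stratum n),
      IsOpen {x : {y : EuclideanSpace ℝ (Fin n) // ‖y‖ ≤ 1} | q ≤ strat n x} :=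
  strat_continuous_general n
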